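/- In a closed TPTL formula x.ψ (future-only fragment, no past operators), every variable y distinct from x appearing in ψ can only be bound to a timestamp greater than or equal to the timestamp bound to x. Consequently, any timing constraint of the form x ≤ y + c with c ≥ 0 occurring in ψ is always true under every relevant evaluation, and any timing constraint of the form y ≤ x + c with c < 0 is always false. -/

import Mathlib

namespace TPTL

/-- Syntax of TPTLP (plain operators) together with the bounded operators of TPTLbP.
    `le x y c` is the timing constraint `x ≤ y + c`, `leC x c` is `x ≤ c`,
    `cong m x y c` is `x ≡_m y + c`.  Bounds of bounded operators live in `ℕ∞`. -/
inductive Formula : Type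
  | tt | ff
  | prop : ℕ → Formula
  | neg : Formula → Formula
  | or : Formula → Formula → Formula
  | and : Formula → Formula → Formula
  | freeze : ℕ → Formula → Formula
  | le : ℕ → ℕ → ℤ → Formula
  | leC : ℕ → ℤ → Formula
  | cong : ℕ → ℕ → ℕ → ℤ → Formula
  | nxt : Formula → Formula
  | untl : Formula → Formula → Formula
  | rel : Formula → Formula → Formula
  | yst : Formula → Formula
  | snc : Formula → Formula → Formula
  | trg : Formula → Formula → Formula
  | nxtB : ℕ∞ → Formula → Formula
  | wnxtB : ℕ∞ → Formula → Formula
  | untlB : ℕ∞ → Formula → Formula → Formula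
  | relB : ℕ∞ → Formula → Formula → Formula
  | ystB : ℕ∞ → Formula → Formula
  | wystB : ℕ∞ → Formula → Formula
  | sncB : ℕ∞ → Formula → Formula → Formula
  | trgB : ℕ∞ → Formula → Formula → Formula
deriving DecidableEq

/-- Timed state sequences: infinite sequences of states and of monotone, progressing
    natural-number timestamps. -/
structure TSS where
  σ : ℕ → Set ℕ
  τ : ℕ → ℕ
  mono : ∀ i, τ i ≤ τ (i+1)
  progress : ∀ t : ℕ, ∃ i, t ≤ τ i

/-- Environments map variables to (integer) time values. -/
abbrev Env := ℕ → ℤ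

/-- Satisfaction `ρ ⊨^i_ξ φ` for TPTLP and the bounded TPTLbP operators. -/
def sat (ρ : TSS) : Formula → ℕ → Env → Prop
  | .tt, _, _ => True
  | .ff, _, _ => False
  | .prop p, i, _ => p ∈ ρ.σ i
  | .neg φ, i, ξ => ¬ sat ρ φ i ξ
  | .or φ ψ, i, ξ => sat ρ φ i ξ ∨ sat ρ ψ i ξ
  | .and φ ψ, i, ξ => sat ρ φ i ξ ∧ sat ρ ψ i ξ
  | .freeze x φ, i, ξ => sat ρ φ i (Function.update ξ x (ρ.τ i : ℤ))
  | .le x y c, _, ξ => ξ x ≤ ξ y + c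
  | .leC x c, _, ξ => ξ x ≤ c
  | .cong m x y c, _, ξ => (ξ x) % (m : ℤ) = (ξ y + c) % (m : ℤ)
  | .nxt φ, i, ξ => sat ρ φ (i+1) ξ
  | .untl φ ψ, i, ξ => ∃ j, i ≤ j ∧ sat ρ ψ j ξ ∧ ∀ k, i ≤ k → k < j → sat ρ φ k ξ
  | .rel φ ψ, i, ξ => (∀ j, i ≤ j → sat ρ ψ j ξ) ∨
      ∃ k, i ≤ k ∧ sat ρ φ k ξ ∧ ∀ j, i ≤ j → j ≤ k → sat ρ ψ j ξ
  | .yst φ, i, ξ => 0 < i ∧ sat ρ φ (i-1) ξ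
  | .snc φ ψ, i, ξ => ∃ j, j ≤ i ∧ sat ρ ψ j ξ ∧ ∀ k, j < k → k ≤ i → sat ρ φ k ξ
  | .trg φ ψ, i, ξ => (∀ j, j ≤ i → sat ρ ψ j ξ) ∨
      ∃ k, k ≤ i ∧ sat ρ φ k ξ ∧ ∀ j, k ≤ j → j ≤ i → sat ρ ψ j ξ
  | .nxtB w φ, i, ξ => ((ρ.τ (i+1) - ρ.τ i : ℕ) : ℕ∞) ≤ w ∧ sat ρ φ (i+1) ξ
  | .wnxtB w φ, i, ξ => ((ρ.τ (i+1) - ρ.τ i : ℕ) : ℕ∞) ≤ w → sat ρ φ (i+1) ξ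
  | .untlB w φ ψ, i, ξ => ∃ j, i ≤ j ∧ ((ρ.τ j - ρ.τ i : ℕ) : ℕ∞) ≤ w ∧ sat ρ ψ j ξ ∧
      ∀ k, i ≤ k → k < j → sat ρ φ k ξ
  | .relB w φ ψ, i, ξ => (∀ j, i ≤ j → ((ρ.τ j - ρ.τ i : ℕ) : ℕ∞) ≤ w → sat ρ ψ j ξ) ∨
      ∃ k, i ≤ k ∧ ((ρ.τ k - ρ.τ i : ℕ) : ℕ∞) ≤ w ∧ sat ρ φ k ξ ∧
        ∀ j, i ≤ j → j ≤ k → sat ρ ψ j ξ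
  | .ystB w φ, i, ξ => 0 < i ∧ ((ρ.τ i - ρ.τ (i-1) : ℕ) : ℕ∞) ≤ w ∧ sat ρ φ (i-1) ξ
  | .wystB w φ, i, ξ => (0 < i ∧ ((ρ.τ i - ρ.τ (i-1) : ℕ) : ℕ∞) ≤ w) → sat ρ φ (i-1) ξ
  | .sncB w φ ψ, i, ξ => ∃ j, j ≤ i ∧ ((ρ.τ i - ρ.τ j : ℕ) : ℕ∞) ≤ w ∧ sat ρ ψ j ξ ∧
      ∀ k, j < k → k ≤ i → sat ρ φ k ξ
  | .trgB w φ ψ, i, ξ => (∀ j, j ≤ i → ((ρ.τ i - ρ.τ j : ℕ) : ℕ∞) ≤ w → sat ρ ψ j ξ) ∨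
      ∃ k, k ≤ i ∧ ((ρ.τ i - ρ.τ k : ℕ) : ℕ∞) ≤ w ∧ sat ρ φ k ξ ∧
        ∀ j, k ≤ j → j ≤ i → sat ρ ψ j ξ

/-- Free occurrence of a variable in a formula. -/
def FreeIn (v : ℕ) : Formula → Prop
  | .tt | .ff | .prop _ => False
  | .neg φ | .nxt φ | .yst φ => FreeIn v φ
  | .nxtB _ φ | .wnxtB _ φ | .ystB _ φ | .wystB _ φ => FreeIn v φ
  | .or φ ψ | .and φ ψ | .untl φ ψ | .rel φ ψ | .snc φ ψ | .trg φ ψ => FreeIn v φ ∨ FreeIn v ψ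
  | .untlB _ φ ψ | .relB _ φ ψ | .sncB _ φ ψ | .trgB _ φ ψ => FreeIn v φ ∨ FreeIn v ψ
  | .freeze x φ => v ≠ x ∧ FreeIn v φ
  | .le x y _ => v = x ∨ v = y
  | .leC x _ => v = x
  | .cong _ x y _ => v = x ∨ v = y

/-- A formula is closed if no variable occurs free in it. -/
def Closed (φ : Formula) : Prop := ∀ v, ¬ FreeIn v φ

/-- Material implication, as a shortcut. -/
def Formula.imp (a b : Formula) : Formula := .or (.neg a) b

end TPTL
namespace TPTL

/-- The future-only (TPTL) fragment: no past and no bounded operators. -/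
def FutureOnly : Formula → Prop
  | .tt | .ff | .prop _ | .le _ _ _ | .leC _ _ | .cong _ _ _ _ => True
  | .neg φ | .nxt φ | .freeze _ φ => FutureOnly φ
  | .or φ ψ | .and φ ψ | .untl φ ψ | .rel φ ψ => FutureOnly φ ∧ FutureOnly ψ
  | _ => False

/-- The temporal shift operator for TPTL formulae (Def. 3.2): constants of timing
    constraints involving `x` are adjusted by `δ`, and constraints `x ≤ y + c'` with
    `c' ≥ 0` (resp. `y ≤ x + c''` with `c'' < 0`) are replaced by `⊤` (resp. `⊥`). -/
def shiftT (x : ℕ) (δ : ℤ) : Formula → Formula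
  | .le a b c =>
      if a = x ∧ b ≠ x then (if 0 ≤ c + δ then .tt else .le a b (c + δ))
      else if b = x ∧ a ≠ x then (if c - δ < 0 then .ff else .le a b (c - δ))
      else .le a b c
  | .cong m a b c =>
      if a = x ∧ b ≠ x then .cong m a b ((c + δ) % (m : ℤ))
      else if b = x ∧ a ≠ x then .cong m a b ((c - δ) % (m : ℤ))
      else .cong m a b c
  | .tt => .tt
  | .ff => .ff
  | .prop p => .prop p
  | .leC a c => .leC a c
  | .neg φ => .neg (shiftT x δ φ)
  | .or φ ψ => .or (shiftT x δ φ) (shiftT x δ ψ)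
  | .and φ ψ => .and (shiftT x δ φ) (shiftT x δ ψ)
  | .freeze y φ => .freeze y (if y = x then φ else shiftT x δ φ)
  | .nxt φ => .nxt (shiftT x δ φ)
  | .untl φ ψ => .untl (shiftT x δ φ) (shiftT x δ ψ)
  | .rel φ ψ => .rel (shiftT x δ φ) (shiftT x δ ψ)
  | .yst φ => .yst (shiftT x δ φ)
  | .snc φ ψ => .snc (shiftT x δ φ) (shiftT x δ ψ)
  | .trg φ ψ => .trg (shiftT x δ φ) (shiftT x δ ψ)
  | .nxtB w φ => .nxtB w (shiftT x δ φ)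
  | .wnxtB w φ => .wnxtB w (shiftT x δ φ)
  | .untlB w φ ψ => .untlB w (shiftT x δ φ) (shiftT x δ ψ)
  | .relB w φ ψ => .relB w (shiftT x δ φ) (shiftT x δ ψ)
  | .ystB w φ => .ystB w (shiftT x δ φ)
  | .wystB w φ => .wystB w (shiftT x δ φ)
  | .sncB w φ ψ => .sncB w (shiftT x δ φ) (shiftT x δ ψ)
  | .trgB w φ ψ => .trgB w (shiftT x δ φ) (shiftT x δ ψ)

end TPTL
namespace TPTL

/-- Simplification of trivially valid / unsatisfiable timing constraints on the
    frozen variable `x` of a closed future-only formula `x.ψ`: every constraint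
    `x ≤ y + c` with `c ≥ 0` is replaced by `⊤` and every `y ≤ x + c` with `c < 0`
    by `⊥` (for `y ≠ x`). -/
def elimT (x : ℕ) : Formula → Formula
  | .le a b c =>
      if a = x ∧ b ≠ x ∧ 0 ≤ c then .tt
      else if b = x ∧ a ≠ x ∧ c < 0 then .ff
      else .le a b c
  | .tt => .tt
  | .ff => .ff
  | .prop p => .prop p
  | .leC a c => .leC a c
  | .cong m a b c => .cong m a b c
  | .neg φ => .neg (elimT x φ)
  | .or φ ψ => .or (elimT x φ) (elimT x ψ)
  | .and φ ψ => .and (elimT x φ) (elimT x ψ)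
  | .freeze y φ => .freeze y (if y = x then φ else elimT x φ)
  | .nxt φ => .nxt (elimT x φ)
  | .untl φ ψ => .untl (elimT x φ) (elimT x ψ)
  | .rel φ ψ => .rel (elimT x φ) (elimT x ψ)
  | .yst φ => .yst (elimT x φ)
  | .snc φ ψ => .snc (elimT x φ) (elimT x ψ)
  | .trg φ ψ => .trg (elimT x φ) (elimT x ψ)
  | .nxtB w φ => .nxtB w (elimT x φ)
  | .wnxtB w φ => .wnxtB w (elimT x φ)
  | .untlB w φ ψ => .untlB w (elimT x φ) (elimT x ψ)
  | .relB w φ ψ => .relB w (elimT x φ) (elimT x ψ)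
  | .ystB w φ => .ystB w (elimT x φ)
  | .wystB w φ => .wystB w (elimT x φ)
  | .sncB w φ ψ => .sncB w (elimT x φ) (elimT x ψ)
  | .trgB w φ ψ => .trgB w (elimT x φ) (elimT x ψ)

theorem TSS.monotone_τ (ρ : TSS) : Monotone ρ.τ := monotone_nat_of_le_succ ρ.mono

section

variable {ρ : TSS} {x : ℕ}

theorem sat_le_iff_sat_elimT {i a b : ℕ} {c : ℤ} {ξ : Env}
    (ha : a ≠ x → ξ x ≤ ξ a) (hb : b ≠ x → ξ x ≤ ξ b) :
    sat ρ (.le a b c) i ξ ↔ sat ρ (elimT x (.le a b c)) i ξ := by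
  simp only [elimT]
  split_ifs with hxb hax
  · obtain ⟨rfl, hbx, hc⟩ := hxb
    simp only [sat, iff_true]
    linarith [hb hbx]
  · obtain ⟨rfl, hax, hc⟩ := hax
    simp only [sat, iff_false, not_le]
    linarith [ha hax]
  · rfl

/-- Future-only operators move forward in time and freeze other variables to later timestamps,
so `ξ x ≤ τ i` and `ξ x ≤ ξ v` for the other free `v` persist into subformulae; they decide the
eliminated constraints. -/
theorem sat_iff_sat_elimT {ψ : Formula} (hψ : FutureOnly ψ) {i : ℕ} {ξ : Env}
    (hτ : ξ x ≤ ρ.τ i) (hfree : ∀ v, FreeIn v ψ → v ≠ x → ξ x ≤ ξ v) :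
    sat ρ ψ i ξ ↔ sat ρ (elimT x ψ) i ξ := by
  induction ψ generalizing i ξ with
  | tt | ff | prop | leC | cong => rfl
  | le a b c => exact sat_le_iff_sat_elimT (hfree a (.inl rfl)) (hfree b (.inr rfl))
  | neg φ ih => exact not_congr (ih hψ hτ hfree)
  | or φ ψ ihφ ihψ =>
    exact or_congr (ihφ hψ.1 hτ fun v hv => hfree v (.inl hv))
      (ihψ hψ.2 hτ fun v hv => hfree v (.inr hv))
  | and φ ψ ihφ ihψ =>
    exact and_congr (ihφ hψ.1 hτ fun v hv => hfree v (.inl hv))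
      (ihψ hψ.2 hτ fun v hv => hfree v (.inr hv))
  | freeze y φ ih =>
    simp only [sat, elimT]
    split_ifs with hyx
    · rfl
    · have hxy : x ≠ y := Ne.symm hyx
      refine ih hψ (by rwa [Function.update_of_ne hxy]) fun v hv hvx => ?_
      rw [Function.update_of_ne hxy]
      by_cases hvy : v = y
      · rwa [hvy, Function.update_self]
      · rw [Function.update_of_ne hvy]
        exact hfree v ⟨hvy, hv⟩ hvx
  | nxt φ ih => exact ih hψ (hτ.trans (mod_cast ρ.monotone_τ i.le_succ)) hfree
  | untl φ ψ ihφ ihψ =>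
    have hφ_iff : ∀ j, i ≤ j → (sat ρ φ j ξ ↔ sat ρ (elimT x φ) j ξ) := fun j hij =>
      ihφ hψ.1 (hτ.trans (mod_cast ρ.monotone_τ hij)) fun v hv => hfree v (.inl hv)
    have hψ_iff : ∀ j, i ≤ j → (sat ρ ψ j ξ ↔ sat ρ (elimT x ψ) j ξ) := fun j hij =>
      ihψ hψ.2 (hτ.trans (mod_cast ρ.monotone_τ hij)) fun v hv => hfree v (.inr hv)
    exact exists_congr fun j => and_congr_right fun hij => and_congr (hψ_iff j hij)
      (forall_congr' fun k => imp_congr_right fun hik => imp_congr_right fun _ => hφ_iff k hik)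
  | rel φ ψ ihφ ihψ =>
    have hφ_iff : ∀ j, i ≤ j → (sat ρ φ j ξ ↔ sat ρ (elimT x φ) j ξ) := fun j hij =>
      ihφ hψ.1 (hτ.trans (mod_cast ρ.monotone_τ hij)) fun v hv => hfree v (.inl hv)
    have hψ_iff : ∀ j, i ≤ j → (sat ρ ψ j ξ ↔ sat ρ (elimT x ψ) j ξ) := fun j hij =>
      ihψ hψ.2 (hτ.trans (mod_cast ρ.monotone_τ hij)) fun v hv => hfree v (.inr hv)
    exact or_congr (forall_congr' fun j => imp_congr_right (hψ_iff j))
      (exists_congr fun k => and_congr_right fun hik => and_congr (hφ_iff k hik)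
        (forall_congr' fun j => imp_congr_right fun hij => imp_congr_right fun _ => hψ_iff j hij))
  | _ => exact hψ.elim

end

/-- In a closed future-only (TPTL) formula `x.ψ`, every other variable
    `y` can only be bound to a timestamp `≥` the one bound to `x`; consequently, replacing
    the constraints `x ≤ y + c` with `c ≥ 0` by `⊤` and `y ≤ x + c` with `c < 0` by `⊥`
    preserves the semantics of `x.ψ` under every evaluation. -/
theorem tptl_future_constraints_trivial (x : ℕ) (ψ : Formula)
    (hfut : FutureOnly ψ) (hcl : Closed (.freeze x ψ)) :
    ∀ (ρ : TSS) (i : ℕ) (ξ : Env),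
      sat ρ (.freeze x ψ) i ξ ↔ sat ρ (.freeze x (elimT x ψ)) i ξ := by
  intro ρ i ξ
  exact sat_iff_sat_elimT hfut (Function.update_self x _ ξ).le fun v hv hvx =>
    absurd ⟨hvx, hv⟩ (hcl v)

end TPTL
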